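/- arXiv:2305.02689 — 3 statements merged into one kernel-verified Lean document; each statement's English description precedes it below -/
import Mathlib

section
/- There is no finite set A of prime numbers such that the sum of the reciprocals of the elements of A equals 1. -/
theorem no_finite_prime_reciprocal_sum_one :
    ¬ ∃ A : Finset ℕ, (∀ p ∈ A, p.Prime) ∧ ∑ p ∈ A, (1 : ℚ) / p = 1 := by
  rintro ⟨A, hP, hsum⟩
  -- A is nonempty
  have hne : A.Nonempty := by
    rcases A.eq_empty_or_nonempty with h | h
    · rw [h] at hsum; simp at hsum
    · exact h
  obtain ⟨q, hq⟩ := hne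
  have hqp := hP q hq
  -- key identity over ℚ
  have key : ∑ p ∈ A, ∏ r ∈ A.erase p, (r : ℚ) = ∏ r ∈ A, (r : ℚ) := by
    calc ∑ p ∈ A, ∏ r ∈ A.erase p, (r : ℚ)
        = ∑ p ∈ A, (1 / p) * ∏ r ∈ A, (r : ℚ) := by
          apply Finset.sum_congr rfl
          intro p hp
          have hp0 : (p : ℚ) ≠ 0 := by
            exact_mod_cast (hP p hp).pos.ne'
          rw [← Finset.mul_prod_erase A _ hp]
          field_simp
      _ = (∑ p ∈ A, (1 : ℚ) / p) * ∏ r ∈ A, (r : ℚ) := by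
          rw [Finset.sum_mul]
      _ = ∏ r ∈ A, (r : ℚ) := by rw [hsum, one_mul]
  -- cast to ℕ
  have keyN : ∑ p ∈ A, ∏ r ∈ A.erase p, r = ∏ r ∈ A, r := by
    have h2 : ((∑ p ∈ A, ∏ r ∈ A.erase p, r : ℕ) : ℚ) = ((∏ r ∈ A, r : ℕ) : ℚ) := by
      push_cast
      exact key
    exact_mod_cast h2
  -- q divides the product
  have hdvd_prod : q ∣ ∏ r ∈ A, r := Finset.dvd_prod_of_mem _ hq
  -- q divides every term except the q-term
  have hdvd_sum : q ∣ ∑ p ∈ A.erase q, ∏ r ∈ A.erase p, r := by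
    apply Finset.dvd_sum
    intro p hp
    have hqe : q ∈ A.erase p := by
      rw [Finset.mem_erase] at hp ⊢
      exact ⟨Ne.symm hp.1, hq⟩
    exact Finset.dvd_prod_of_mem _ hqe
  have hsplit : ∏ r ∈ A.erase q, r + ∑ p ∈ A.erase q, ∏ r ∈ A.erase p, r
      = ∏ r ∈ A, r := by
    rw [← keyN]
    exact Finset.add_sum_erase A (fun p => ∏ r ∈ A.erase p, r) hq
  have hdvd_q : q ∣ ∏ r ∈ A.erase q, r := by
    have h3 : q ∣ ∏ r ∈ A.erase q, r + ∑ p ∈ A.erase q, ∏ r ∈ A.erase p, r := by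
      rw [hsplit]; exact hdvd_prod
    exact (Nat.dvd_add_iff_left hdvd_sum).mpr h3
  obtain ⟨r, hr, hqr⟩ := hqp.prime.exists_mem_finset_dvd hdvd_q
  rw [Finset.mem_erase] at hr
  exact hr.1 ((Nat.prime_dvd_prime_iff_eq hqp (hP r hr.2)).mp hqr).symm
end

section
/- (Sieve of Eratosthenes–Legendre) Let A be a finite set of integers, 𝒫 a finite set of primes, z ≥ 2, and P(z) = ∏_{p ∈ 𝒫, p < z} p. Suppose f is a multiplicative function and X > 1 satisfies |A_d| = f(d)X + R_d for all d | P(z), where A_d = {n ∈ A : d | n}. Then #{n ∈ A : gcd(n, P(z)) = 1} ≪ X · ∏_{p ∈ 𝒫, p < z} (1 - f(p)) + ∑_{d | P(z)} |R_d|. -/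
open ArithmeticFunction Finset
open scoped ArithmeticFunction.Moebius

private lemma squarefree_prod_primes {s : Finset ℕ} (hs : ∀ p ∈ s, p.Prime) :
    Squarefree (∏ p ∈ s, p) := by
  classical
  induction s using Finset.induction_on with
  | empty => simpa using squarefree_one
  | @insert a s ha ih =>
    rw [Finset.prod_insert ha]
    have hap : a.Prime := hs a (Finset.mem_insert_self a s)
    have hcop : Nat.Coprime a (∏ p ∈ s, p) := by
      apply Nat.Coprime.prod_right
      intro p hp
      exact (Nat.coprime_primes hap (hs p (Finset.mem_insert_of_mem hp))).mpr
        (fun h => ha (h ▸ hp))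
    exact (Nat.squarefree_mul hcop).mpr
      ⟨hap.squarefree, ih fun p hp => hs p (Finset.mem_insert_of_mem hp)⟩

private lemma sum_moebius_divisors (g : ℕ) (hg : g ≠ 0) :
    (∑ d ∈ g.divisors, ((μ d : ℤ) : ℝ)) = if g = 1 then 1 else 0 := by
  have h := congrArg (fun F : ArithmeticFunction ℤ => F g) moebius_mul_coe_zeta
  simp only [coe_mul_zeta_apply, one_apply] at h
  rw [← Int.cast_sum, h]
  split <;> simp

theorem eratosthenes_legendre_sieve :
    ∃ C > (0 : ℝ), ∀ (A : Finset ℤ) (P : Finset ℕ), (∀ p ∈ P, p.Prime) →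
      ∀ z : ℝ, 2 ≤ z → ∀ f : ℕ → ℝ,
        f 1 = 1 → (∀ m n : ℕ, Nat.Coprime m n → f (m * n) = f m * f n) →
        (∀ p ∈ P, 0 ≤ f p ∧ f p ≤ 1) →
        ∀ X : ℝ, 1 < X → ∀ R : ℕ → ℝ,
        (∀ d ∈ (∏ p ∈ P.filter (fun p : ℕ => (p : ℝ) < z), p).divisors,
          ((A.filter (fun n => (d : ℤ) ∣ n)).card : ℝ) = f d * X + R d) →
        ((A.filter (fun n =>
            Int.gcd n ((∏ p ∈ P.filter (fun p : ℕ => (p : ℝ) < z), p) : ℤ) = 1)).card : ℝ) ≤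
          C * (X * ∏ p ∈ P.filter (fun p : ℕ => (p : ℝ) < z), (1 - f p) +
            ∑ d ∈ (∏ p ∈ P.filter (fun p : ℕ => (p : ℝ) < z), p).divisors, |R d|) := by
  classical
  refine ⟨1, one_pos, ?_⟩
  intro A P hP z hz f hf1 hfmul hfp X hX R hR
  set S := P.filter (fun p : ℕ => (p : ℝ) < z) with hSdef
  set Q := ∏ p ∈ S, p with hQdef
  have hSp : ∀ p ∈ S, p.Prime := fun p hp => hP p (Finset.mem_filter.mp hp).1
  have hQsf : Squarefree Q := squarefree_prod_primes hSp
  have hQ0 : Q ≠ 0 := hQsf.ne_zero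
  have hpf : Q.primeFactors = S := Nat.primeFactors_prod hSp
  -- arithmetic function version of f
  set F : ArithmeticFunction ℝ := ⟨fun n => if n = 0 then 0 else f n, by simp⟩ with hFdef
  have hFapp : ∀ n : ℕ, n ≠ 0 → F n = f n := fun n hn => if_neg hn
  have hFm : F.IsMultiplicative := by
    constructor
    · show (if (1 : ℕ) = 0 then (0 : ℝ) else f 1) = 1
      simp [hf1]
    · intro m n hmn
      rcases eq_or_ne m 0 with rfl | hm
      · have hn1 : n = 1 := Nat.coprime_zero_left n |>.mp hmn
        subst hn1
        simp [F.map_zero]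
      rcases eq_or_ne n 0 with rfl | hn
      · have hm1 : m = 1 := Nat.coprime_zero_right m |>.mp hmn
        subst hm1
        simp [F.map_zero]
      · rw [hFapp _ (Nat.mul_ne_zero hm hn), hFapp _ hm, hFapp _ hn]
        exact hfmul m n hmn
  -- product formula
  have hprod : ∏ p ∈ S, (1 - f p) = ∑ d ∈ Q.divisors, ((μ d : ℤ) : ℝ) * f d := by
    have h := ArithmeticFunction.IsMultiplicative.prodPrimeFactors_one_sub_of_squarefree
      F hFm hQsf
    rw [hpf] at h
    calc ∏ p ∈ S, (1 - f p) = ∏ p ∈ S, (1 - F p) :=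
          Finset.prod_congr rfl fun p hp => by rw [hFapp p (hSp p hp).ne_zero]
      _ = ∑ d ∈ Q.divisors, ((μ d : ℤ) : ℝ) * F d := h
      _ = ∑ d ∈ Q.divisors, ((μ d : ℤ) : ℝ) * f d :=
          Finset.sum_congr rfl fun d hd => by
            rw [hFapp d (Nat.pos_of_mem_divisors hd).ne']
  -- pointwise Möbius identity
  have hcount : ∀ n : ℤ, (if Int.gcd n (Q : ℤ) = 1 then (1 : ℝ) else 0)
      = ∑ d ∈ Q.divisors, ((μ d : ℤ) : ℝ) * (if (d : ℤ) ∣ n then 1 else 0) := by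
    intro n
    have hgcd : Int.gcd n (Q : ℤ) = Nat.gcd n.natAbs Q := by
      rw [Int.gcd_def, Int.natAbs_natCast]
    set g := Nat.gcd n.natAbs Q with hgdef
    have hg0 : g ≠ 0 := Nat.gcd_ne_zero_right hQ0
    have hfilter : Q.divisors.filter (fun d : ℕ => (d : ℤ) ∣ n) = g.divisors := by
      ext d
      simp only [Finset.mem_filter, Nat.mem_divisors, Int.natCast_dvd, hgdef,
        Nat.dvd_gcd_iff]
      constructor
      · rintro ⟨⟨h1, _⟩, h2⟩; exact ⟨⟨h2, h1⟩, hg0⟩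
      · rintro ⟨⟨h2, h1⟩, _⟩; exact ⟨⟨h1, hQ0⟩, h2⟩
    calc (if Int.gcd n (Q : ℤ) = 1 then (1 : ℝ) else 0)
        = (if g = 1 then (1 : ℝ) else 0) := by rw [hgcd]
      _ = ∑ d ∈ g.divisors, ((μ d : ℤ) : ℝ) := (sum_moebius_divisors g hg0).symm
      _ = ∑ d ∈ Q.divisors.filter (fun d : ℕ => (d : ℤ) ∣ n), ((μ d : ℤ) : ℝ) := by
          rw [hfilter]
      _ = ∑ d ∈ Q.divisors, ((μ d : ℤ) : ℝ) * (if (d : ℤ) ∣ n then 1 else 0) := by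
          rw [Finset.sum_filter]
          exact Finset.sum_congr rfl fun d _ => by split <;> simp
  -- main computation
  have hmain : ((A.filter (fun n => Int.gcd n (Q : ℤ) = 1)).card : ℝ)
      = X * ∏ p ∈ S, (1 - f p) + ∑ d ∈ Q.divisors, ((μ d : ℤ) : ℝ) * R d := by
    calc ((A.filter (fun n => Int.gcd n (Q : ℤ) = 1)).card : ℝ)
        = ∑ n ∈ A, (if Int.gcd n (Q : ℤ) = 1 then (1 : ℝ) else 0) := by
          rw [Finset.sum_boole]
      _ = ∑ n ∈ A, ∑ d ∈ Q.divisors, ((μ d : ℤ) : ℝ) * (if (d : ℤ) ∣ n then 1 else 0) :=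
          Finset.sum_congr rfl fun n _ => hcount n
      _ = ∑ d ∈ Q.divisors, ((μ d : ℤ) : ℝ) * ((A.filter (fun n => (d : ℤ) ∣ n)).card : ℝ) := by
          rw [Finset.sum_comm]
          exact Finset.sum_congr rfl fun d _ => by
            rw [← Finset.mul_sum, Finset.sum_boole]
      _ = ∑ d ∈ Q.divisors, ((μ d : ℤ) : ℝ) * (f d * X + R d) :=
          Finset.sum_congr rfl fun d hd => by rw [hR d hd]
      _ = X * (∑ d ∈ Q.divisors, ((μ d : ℤ) : ℝ) * f d)
            + ∑ d ∈ Q.divisors, ((μ d : ℤ) : ℝ) * R d := by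
          rw [Finset.mul_sum, ← Finset.sum_add_distrib]
          exact Finset.sum_congr rfl fun d _ => by ring
      _ = X * ∏ p ∈ S, (1 - f p) + ∑ d ∈ Q.divisors, ((μ d : ℤ) : ℝ) * R d := by
          rw [hprod]
  have hcast : (∏ p ∈ S, (p : ℤ)) = ((Q : ℕ) : ℤ) := by rw [hQdef]; push_cast; rfl
  rw [hcast, hmain, one_mul]
  apply add_le_add_right
  apply Finset.sum_le_sum
  intro d _
  calc ((μ d : ℤ) : ℝ) * R d ≤ |((μ d : ℤ) : ℝ) * R d| := le_abs_self _
    _ = |((μ d : ℤ) : ℝ)| * |R d| := abs_mul _ _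
    _ ≤ 1 * |R d| := by
        apply mul_le_mul_of_nonneg_right _ (abs_nonneg _)
        rw [← Int.cast_abs, ← Int.cast_one]
        exact_mod_cast ArithmeticFunction.abs_moebius_le_one
    _ = |R d| := one_mul _
end

section
/- Let h be a nonzero integer and q ≥ 1 coprime to |h|, and let A be the set of all primes congruent to h mod q. Then ∑_{p ∈ A, p ≤ N} 1/p ≥ (1/φ(q) + o(1)) · log log N as N → ∞, and the same lower bound holds after removing any finite set from A. -/
open MeasureTheory in
lemma aux_integral_rpow_neg {b : ℝ} (hb : 1 < b) {u v : ℝ} (huv : u ≤ v) :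
    ∫ t in Set.Ioc u v, b ^ (-t) = (b ^ (-u) - b ^ (-v)) / Real.log b := by
  have hb0 : (0:ℝ) < b := lt_trans one_pos hb
  have hlb : 0 < Real.log b := Real.log_pos hb
  rw [← intervalIntegral.integral_of_le huv]
  have hF : ∀ t ∈ Set.uIcc u v, HasDerivAt (fun t : ℝ => -(b ^ (-t)) / Real.log b)
      (b ^ (-t)) t := by
    intro t _
    have h1 : HasDerivAt (fun t : ℝ => b ^ (-t)) ((b ^ (-t) * Real.log b) * (-1)) t :=
      (Real.hasStrictDerivAt_const_rpow hb0 (-t)).hasDerivAt.comp t (hasDerivAt_neg t)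
    refine (h1.neg.div_const (Real.log b)).congr_deriv ?_
    rw [mul_neg_one, neg_neg, mul_div_assoc, div_self hlb.ne', mul_one]
  have hcont : IntervalIntegrable (fun t : ℝ => b ^ (-t)) volume u v := by
    apply Continuous.intervalIntegrable
    simp only [Real.rpow_def_of_pos hb0]
    exact Real.continuous_exp.comp (continuous_const.mul continuous_neg)
  rw [intervalIntegral.integral_eq_sub_of_hasDerivAt hF hcont]
  ring


open ArithmeticFunction LSeries MeasureTheory in
lemma key_lower (q : ℕ) [NeZero q] {a : ZMod q} (ha : IsUnit a) :
    ∃ C : ℝ, ∀ {δ : ℝ}, 0 < δ → δ < 1 →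
      (q.totient : ℝ)⁻¹ * (-Real.log δ) - C ≤
        ∑' n : ℕ, (if n.Prime ∧ (n : ZMod q) = a then ((n : ℝ) ^ (-(1 + δ))) else 0) := by
  obtain ⟨C₀, hC₀⟩ := vonMangoldt.LSeries_residueClass_lower_bound ha
  set c : ℕ → ℝ := vonMangoldt.residueClass a with hc
  have hc0 : ∀ n, 0 ≤ c n := vonMangoldt.residueClass_nonneg a
  have hczero : c 0 = 0 := vonMangoldt.residueClass_apply_zero a
  have hcone : c 1 = 0 := by
    simp [hc, vonMangoldt.residueClass, Set.indicator_apply]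
  set D : ℝ := (Real.log 2)⁻¹ * ∑' n : ℕ, (if n.Prime then 0 else c n) / n with hD
  refine ⟨max C₀ 0 + D, fun {δ} hδ0 hδ1 => ?_⟩
  set C₁ := max C₀ 0 with hC₁
  have hsum : ∀ x : ℝ, 1 < x → Summable fun n : ℕ => c n / (n : ℝ) ^ x := by
    intro x hx
    exact LSeries.summable_real_of_abscissaOfAbsConv_lt
      ((vonMangoldt.abscissaOfAbsConv_residueClass_le_one a).trans_lt (by exact_mod_cast hx))
  have h12 : (1 : ℝ) + δ ≤ 2 := by linarith
  have h1δ : (1 : ℝ) < 1 + δ := by linarith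
  -- the family of functions to integrate
  set f : ℕ → ℝ → ℝ := fun n t => c n / (n : ℝ) ^ t with hf
  set S : Set ℝ := Set.Ioc (1 + δ) 2 with hS
  set I : ℕ → ℝ := fun n => ∫ t in S, f n t with hI
  -- measurability
  have hmeas : ∀ n : ℕ, AEStronglyMeasurable (f n) (volume.restrict S) := by
    intro n
    rcases Nat.eq_zero_or_pos n with rfl | hn
    · refine (aestronglyMeasurable_const (b := (0:ℝ))).congr ?_
      refine Filter.Eventually.of_forall fun t => ?_
      simp [hf, hczero]
    · have hn0 : (0:ℝ) < n := by exact_mod_cast hn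
      apply Continuous.aestronglyMeasurable
      apply Continuous.div continuous_const
      · exact Continuous.rpow continuous_const continuous_id fun x => Or.inl hn0.ne'
      · intro t
        exact (Real.rpow_pos_of_pos hn0 t).ne'
  -- the interchange
  have hinter : (∫ t in S, ∑' n, f n t) = ∑' n, I n := by
    refine integral_tsum hmeas ?_
    have hbound : ∀ n : ℕ, (∫⁻ t, ‖f n t‖₊ ∂(volume.restrict S))
        ≤ ENNReal.ofReal (c n / (n : ℝ) ^ (1 + δ)) := by
      intro n
      have hpt : ∀ t ∈ S, (‖f n t‖₊ : ENNReal) ≤ ENNReal.ofReal (c n / (n : ℝ) ^ (1 + δ)) := by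
        intro t ht
        have hfn : 0 ≤ f n t := div_nonneg (hc0 n) (Real.rpow_nonneg (Nat.cast_nonneg n) _)
        rw [← enorm_eq_nnnorm, Real.enorm_eq_ofReal hfn]
        apply ENNReal.ofReal_le_ofReal
        show c n / (n:ℝ) ^ t ≤ _
        rcases Nat.eq_zero_or_pos n with rfl | hn
        · simp [hczero]
        · have hn1 : (1:ℝ) ≤ n := by exact_mod_cast hn
          apply div_le_div_of_nonneg_left (hc0 n) (Real.rpow_pos_of_pos (by linarith) _)
          exact Real.rpow_le_rpow_of_exponent_le hn1 ht.1.le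
      calc (∫⁻ t, ‖f n t‖₊ ∂(volume.restrict S))
          ≤ ∫⁻ _ , ENNReal.ofReal (c n / (n : ℝ) ^ (1 + δ)) ∂(volume.restrict S) :=
            setLIntegral_mono measurable_const hpt
        _ = ENNReal.ofReal (c n / (n : ℝ) ^ (1 + δ)) * volume S := by
            rw [lintegral_const, Measure.restrict_apply_univ]
        _ ≤ ENNReal.ofReal (c n / (n : ℝ) ^ (1 + δ)) * 1 := by
            apply mul_le_mul_right
            rw [hS, Real.volume_Ioc]
            apply ENNReal.ofReal_le_one.mpr
            linarith
        _ = ENNReal.ofReal (c n / (n : ℝ) ^ (1 + δ)) := mul_one _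
    have hofreal : ∑' n : ℕ, ENNReal.ofReal (c n / (n : ℝ) ^ (1 + δ))
        = ENNReal.ofReal (∑' n : ℕ, c n / (n : ℝ) ^ (1 + δ)) :=
      (ENNReal.ofReal_tsum_of_nonneg
        (fun n => div_nonneg (hc0 n) (Real.rpow_nonneg (Nat.cast_nonneg n) _))
        (hsum _ h1δ)).symm
    exact ne_top_of_le_ne_top (hofreal ▸ ENNReal.ofReal_ne_top)
      (ENNReal.tsum_le_tsum hbound)
  -- evaluation of I n for n ≥ 2
  have hIeval : ∀ n : ℕ, 2 ≤ n →
      I n = c n * (((n : ℝ) ^ (-(1 + δ)) - (n : ℝ) ^ (-(2 : ℝ))) / Real.log n) := by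
    intro n hn
    have hn1 : (1:ℝ) < n := by exact_mod_cast hn
    have heq : ∀ t : ℝ, f n t = c n * (n : ℝ) ^ (-t) := by
      intro t
      show c n / (n:ℝ) ^ t = _
      rw [Real.rpow_neg (by positivity), div_eq_mul_inv]
    rw [hI]
    simp_rw [heq]
    rw [integral_const_mul, aux_integral_rpow_neg hn1 h12]
  have hI0 : I 0 = 0 := by
    rw [hI]
    simp [hf, hczero]
  have hI1 : I 1 = 0 := by
    rw [hI]
    simp [hf, hcone]
  -- the comparison functions
  set Jp : ℕ → ℝ := fun n =>
    if n.Prime ∧ (n : ZMod q) = a then ((n : ℝ) ^ (-(1 + δ))) else 0 with hJp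
  set Jnp : ℕ → ℝ := fun n => (Real.log 2)⁻¹ * ((if n.Prime then 0 else c n) / n) with hJnp
  have hsumJp : Summable Jp := by
    refine Summable.of_nonneg_of_le (fun n => ?_) (fun n => ?_)
      (Real.summable_nat_rpow.mpr (show -(1+δ) < -1 by linarith))
    · rw [hJp]; dsimp only; split_ifs
      · exact Real.rpow_nonneg (Nat.cast_nonneg n) _
      · exact le_rfl
    · rw [hJp]; dsimp only; split_ifs
      · exact le_rfl
      · exact Real.rpow_nonneg (Nat.cast_nonneg n) _
  have hsumJnp : Summable Jnp :=
    (vonMangoldt.summable_residueClass_non_primes_div a).mul_left _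
  have hJpn : ∀ n, 0 ≤ Jp n := by
    intro n
    rw [hJp]; dsimp only; split_ifs
    · exact Real.rpow_nonneg (Nat.cast_nonneg n) _
    · exact le_rfl
  have hJnpn : ∀ n, 0 ≤ Jnp n := by
    intro n
    rw [hJnp]; dsimp only
    apply mul_nonneg (inv_nonneg.mpr (Real.log_nonneg one_le_two))
    apply div_nonneg _ (Nat.cast_nonneg n)
    split_ifs
    · exact le_rfl
    · exact hc0 n
  have hIJ : ∀ n, I n ≤ Jp n + Jnp n := by
    intro n
    match n, hI0, hI1 with
    | 0, hI0, _ => rw [hI0]; exact add_nonneg (hJpn 0) (hJnpn 0)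
    | 1, _, hI1 => rw [hI1]; exact add_nonneg (hJpn 1) (hJnpn 1)
    | (m+2), _, _ =>
      set n := m + 2 with hn'
      have hn : 2 ≤ n := by omega
      have hn1 : (1:ℝ) < n := by exact_mod_cast hn
      have hlogn : Real.log 2 ≤ Real.log n := by
        apply Real.log_le_log (by norm_num)
        exact_mod_cast hn
      have hlog2 : 0 < Real.log 2 := Real.log_pos (by norm_num)
      have hlognpos : 0 < Real.log n := lt_of_lt_of_le hlog2 hlogn
      have hB : 0 ≤ (n:ℝ) ^ (-(2:ℝ)) := Real.rpow_nonneg (by positivity) _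
      have hA : 0 ≤ (n:ℝ) ^ (-(1+δ)) := Real.rpow_nonneg (by positivity) _
      rw [hIeval n hn]
      by_cases hp : n.Prime
      · have hJnp0 : Jnp n = 0 := by
          rw [hJnp]; dsimp only; rw [if_pos hp, zero_div, mul_zero]
        rw [hJnp0, add_zero]
        simp only [hJp]
        by_cases hcond : (n : ZMod q) = a
        · rw [if_pos ⟨hp, hcond⟩]
          have hcval : c n = Real.log n := by
            rw [hc]
            rw [vonMangoldt.residueClass]
            rw [Set.indicator_of_mem (by exact hcond : n ∈ {k : ℕ | (k : ZMod q) = a})]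
            exact vonMangoldt_apply_prime hp
          rw [hcval, mul_div_assoc', mul_comm, ← mul_div_assoc', div_self hlognpos.ne', mul_one]
          linarith
        · have hcval : c n = 0 := by
            rw [hc, vonMangoldt.residueClass]
            exact Set.indicator_of_notMem (by exact hcond) _
          rw [hcval, zero_mul, if_neg (by tauto)]
      · have hJp0 : Jp n = 0 := by
          simp only [hJp]; rw [if_neg (by tauto)]
        rw [hJp0, zero_add]
        simp only [hJnp]
        rw [if_neg hp]
        have hcn : 0 ≤ c n := hc0 n
        have hAinv : (n:ℝ) ^ (-(1+δ)) ≤ (n:ℝ)⁻¹ := by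
          rw [← Real.rpow_neg_one (n:ℝ)]
          exact Real.rpow_le_rpow_of_exponent_le hn1.le (by linarith)
        calc c n * (((n:ℝ) ^ (-(1+δ)) - (n:ℝ) ^ (-(2:ℝ))) / Real.log n)
            ≤ c n * ((n:ℝ) ^ (-(1+δ)) / Real.log n) := by
              gcongr <;> linarith
          _ ≤ c n * ((n:ℝ)⁻¹ / Real.log 2) := by
              gcongr <;> linarith
          _ = (Real.log 2)⁻¹ * (c n / n) := by ring
  have hInonneg : ∀ n, 0 ≤ I n := by
    intro n
    rw [hI]
    apply setIntegral_nonneg measurableSet_Ioc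
    intro t ht
    exact div_nonneg (hc0 n) (Real.rpow_nonneg (Nat.cast_nonneg n) _)
  have hsumI : Summable I :=
    Summable.of_nonneg_of_le hInonneg hIJ (hsumJp.add hsumJnp)
  -- lower bound on the integral
  have hglow : (q.totient : ℝ)⁻¹ * (-Real.log δ) - C₁ ≤ ∫ t in S, ∑' n, f n t := by
    have hFanti : AntitoneOn (fun t => ∑' n, f n t) (Set.Icc (1+δ) 2) := by
      intro t ht t' ht' htt'
      have h1t : 1 < t := lt_of_lt_of_le h1δ ht.1
      have h1t' : 1 < t' := lt_of_lt_of_le h1δ ht'.1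
      refine Summable.tsum_le_tsum (fun n => ?_) (hsum t' h1t') (hsum t h1t)
      show c n / (n:ℝ) ^ t' ≤ c n / (n:ℝ) ^ t
      rcases Nat.eq_zero_or_pos n with rfl | hn
      · simp [hczero]
      · have hn1 : (1:ℝ) ≤ n := by exact_mod_cast hn
        apply div_le_div_of_nonneg_left (hc0 n) (Real.rpow_pos_of_pos (by linarith) _)
        exact Real.rpow_le_rpow_of_exponent_le hn1 htt'
    have hFint : IntegrableOn (fun t => ∑' n, f n t) S :=
      (AntitoneOn.integrableOn_isCompact isCompact_Icc hFanti).mono_set Set.Ioc_subset_Icc_self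
    have hC₁0 : 0 ≤ C₁ := le_max_right _ _
    have hC01 : C₀ ≤ C₁ := le_max_left _ _
    set g : ℝ → ℝ := fun t => (q.totient : ℝ)⁻¹ * (t - 1)⁻¹ - C₁ with hg
    have hgcont : ContinuousOn g (Set.Icc (1+δ) 2) := by
      apply ContinuousOn.sub _ continuousOn_const
      apply continuousOn_const.mul
      apply ContinuousOn.inv₀ ((continuousOn_id.sub continuousOn_const))
      intro t ht hh
      simp only [Pi.sub_apply, id_eq, sub_eq_zero] at hh
      have h1 := ht.1
      rw [hh] at h1
      linarith
    have hgint : IntegrableOn g S :=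
      (hgcont.integrableOn_compact isCompact_Icc).mono_set Set.Ioc_subset_Icc_self
    have hmono : ∫ t in S, g t ≤ ∫ t in S, ∑' n, f n t := by
      refine setIntegral_mono_on hgint hFint measurableSet_Ioc fun t ht => ?_
      have h1t : 1 < t := lt_trans h1δ ht.1
      have hFlow := hC₀ (Set.mem_Ioc.mpr ⟨h1t, ht.2⟩)
      show (q.totient : ℝ)⁻¹ * (t - 1)⁻¹ - C₁ ≤ _
      calc (q.totient : ℝ)⁻¹ * (t - 1)⁻¹ - C₁
          ≤ (q.totient : ℝ)⁻¹ / (t - 1) - C₀ := by rw [div_eq_mul_inv]; linarith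
        _ ≤ _ := hFlow
    have hii : IntervalIntegrable (fun t : ℝ => (q.totient:ℝ)⁻¹ * (t-1)⁻¹)
        volume (1+δ) 2 := by
      apply ContinuousOn.intervalIntegrable
      rw [Set.uIcc_of_le h12]
      apply continuousOn_const.mul
      apply ContinuousOn.inv₀ ((continuousOn_id.sub continuousOn_const))
      intro t ht hh
      simp only [Pi.sub_apply, id_eq, sub_eq_zero] at hh
      have h1 := ht.1
      rw [hh] at h1
      linarith
    have hshift : (∫ t in (1+δ)..2, (t-1)⁻¹) = ∫ u in δ..1, u⁻¹ := by
      have h := intervalIntegral.integral_comp_sub_right (a := 1+δ) (b := 2)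
        (fun u : ℝ => u⁻¹) 1
      norm_num at h
      convert h using 2 <;> norm_num
    have heval : (∫ t in S, g t) = (q.totient:ℝ)⁻¹ * (-Real.log δ) - C₁ * (1 - δ) := by
      rw [hS, ← intervalIntegral.integral_of_le h12, hg]
      rw [intervalIntegral.integral_sub hii intervalIntegrable_const]
      rw [intervalIntegral.integral_const_mul, hshift,
        integral_inv_of_pos hδ0 one_pos, intervalIntegral.integral_const]
      rw [one_div, Real.log_inv, smul_eq_mul]
      ring
    have hfin : C₁ * (1 - δ) ≤ C₁ := by nlinarith
    linarith [heval ▸ hmono]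
  -- put everything together
  have h1 : ∑' n, I n ≤ (∑' n, Jp n) + D := by
    have := Summable.tsum_add hsumJp hsumJnp
    have hJnpD : ∑' n, Jnp n = D := by
      rw [hD, hJnp]; exact tsum_mul_left
    calc ∑' n, I n ≤ ∑' n, (Jp n + Jnp n) := Summable.tsum_le_tsum hIJ hsumI (hsumJp.add hsumJnp)
      _ = (∑' n, Jp n) + D := by rw [this, hJnpD]
  have := hglow.trans (hinter.le.trans h1)
  linarith


open MeasureTheory in
lemma aux_tail {N : ℕ} (hN : 1 ≤ N) {δ : ℝ} (hδ : 0 < δ) :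
    ∑' k : ℕ, ((k + N + 1 : ℕ) : ℝ) ^ (-(1 + δ)) ≤ (N : ℝ) ^ (-δ) / δ := by
  have hN0 : (0:ℝ) < N := by exact_mod_cast hN
  refine Real.tsum_le_of_sum_range_le (fun k => Real.rpow_nonneg (by positivity) _)
    (fun m => ?_)
  have h1 : (∑ i ∈ Finset.range m, (fun x : ℝ => x ^ (-(1+δ))) ((N:ℝ) + (i + 1 : ℕ)))
      ≤ ∫ x in (N:ℝ)..((N:ℝ) + m), x ^ (-(1+δ)) := by
    refine AntitoneOn.sum_le_integral (f := fun x : ℝ => x ^ (-(1+δ)))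
      (x₀ := (N:ℝ)) (a := m) ?_
    intro x hx y hy hxy
    exact Real.rpow_le_rpow_of_nonpos (lt_of_lt_of_le hN0 hx.1) hxy (by linarith)
  have h2 : (∫ x in (N:ℝ)..((N:ℝ) + m), x ^ (-(1+δ)))
      = (((N:ℝ) + m) ^ (-(1+δ) + 1) - (N:ℝ) ^ (-(1+δ) + 1)) / (-(1+δ) + 1) := by
    apply integral_rpow
    right
    constructor
    · intro hco
      have : δ = 0 := by linarith [neg_eq_iff_eq_neg.mp hco]
      linarith
    · rw [Set.uIcc_of_le (by linarith [Nat.cast_nonneg (α := ℝ) m])]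
      rintro ⟨h0, -⟩
      linarith
  have h3 : (((N:ℝ) + m) ^ (-(1+δ) + 1) - (N:ℝ) ^ (-(1+δ) + 1)) / (-(1+δ) + 1)
      ≤ (N : ℝ) ^ (-δ) / δ := by
    have e : -(1+δ) + 1 = -δ := by ring
    rw [e, div_neg, ← neg_div, neg_sub]
    have h4 : (0:ℝ) ≤ ((N:ℝ) + m) ^ (-δ) := Real.rpow_nonneg (by positivity) _
    gcongr
    linarith
  calc ∑ i ∈ Finset.range m, ((i + N + 1 : ℕ) : ℝ) ^ (-(1 + δ))
      = ∑ i ∈ Finset.range m, (fun x : ℝ => x ^ (-(1+δ))) ((N:ℝ) + (i + 1 : ℕ)) := by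
        refine Finset.sum_congr rfl fun i _ => ?_
        push_cast; ring_nf
    _ ≤ _ := h1.trans (h2 ▸ h3)

lemma sumJp (q : ℕ) (a : ZMod q) {δ : ℝ} (hδ : 0 < δ) :
    Summable (fun n : ℕ => if n.Prime ∧ (n : ZMod q) = a then ((n : ℝ) ^ (-(1 + δ))) else 0) := by
  refine Summable.of_nonneg_of_le (fun n => ?_) (fun n => ?_)
    (Real.summable_nat_rpow.mpr (show -(1+δ) < -1 by linarith))
  · split_ifs
    · exact Real.rpow_nonneg (Nat.cast_nonneg n) _
    · exact le_rfl
  · split_ifs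
    · exact le_rfl
    · exact Real.rpow_nonneg (Nat.cast_nonneg n) _

open Filter in
theorem mertens_primes_in_progression (h : ℤ) (hh : h ≠ 0) (q : ℕ) (hq : 1 ≤ q)
    (hcop : Nat.Coprime h.natAbs q) (B : Finset ℕ) (ε : ℝ) (hε : 0 < ε) :
    ∃ N₀ : ℕ, ∀ N : ℕ, N₀ ≤ N →
      (1 / (Nat.totient q : ℝ) - ε) * Real.log (Real.log N) ≤
        ∑ p ∈ (Finset.range (N + 1)).filter
            (fun p : ℕ => p.Prime ∧ (p : ℤ) ≡ h [ZMOD (q : ℤ)] ∧ p ∉ B),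
          (1 : ℝ) / p := by
  haveI : NeZero q := ⟨by omega⟩
  set a : ZMod q := ((h : ℤ) : ZMod q) with haa
  have ha : IsUnit a := by
    rcases Int.natAbs_eq h with he | he
    · rw [haa, he, Int.cast_natCast]
      exact (ZMod.isUnit_iff_coprime _ q).mpr hcop
    · rw [haa, he, Int.cast_neg, Int.cast_natCast]
      exact ((ZMod.isUnit_iff_coprime _ q).mpr hcop).neg
  obtain ⟨C, hC⟩ := key_lower q ha
  have hφ0 : (0:ℝ) < q.totient := by
    exact_mod_cast Nat.totient_pos.mpr (show 0 < q by omega)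
  set α : ℝ := 1 - min (ε * q.totient / 2) (1/2) with hα
  have hα0 : 0 < α := by
    have : min (ε * q.totient / 2) (1/2) ≤ 1/2 := min_le_right _ _
    rw [hα]; linarith
  have hα1 : α < 1 := by
    have h1 : 0 < min (ε * q.totient / 2) (1/2) :=
      lt_min (by positivity) (by norm_num)
    rw [hα]; linarith
  have hαb : (q.totient : ℝ)⁻¹ - ε/2 ≤ α * (q.totient : ℝ)⁻¹ := by
    have h2 : (1 - α) * (q.totient : ℝ)⁻¹ ≤ ε/2 := by
      have h3 : (1 - α) ≤ ε * q.totient / 2 := by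
        have e : 1 - α = min (ε * q.totient / 2) (1/2) := by rw [hα]; ring
        rw [e]; exact min_le_left _ _
      calc (1 - α) * (q.totient : ℝ)⁻¹ ≤ (ε * q.totient / 2) * (q.totient : ℝ)⁻¹ := by
            apply mul_le_mul_of_nonneg_right h3 (by positivity)
        _ = ε/2 := by field_simp
    nlinarith [inv_pos.mpr hφ0]
  -- eventualities
  have hLtend : Tendsto (fun N : ℕ => Real.log N) atTop atTop :=
    Real.tendsto_log_atTop.comp tendsto_natCast_atTop_atTop
  have ev1 : ∀ᶠ N : ℕ in atTop, 1 < Real.log N := hLtend.eventually_gt_atTop 1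
  have ev2 : ∀ᶠ N : ℕ in atTop,
      2 * (C + 1 + B.card) / ε ≤ Real.log (Real.log N) :=
    (Real.tendsto_log_atTop.comp hLtend).eventually_ge_atTop _
  have ev3 : ∀ᶠ N : ℕ in atTop,
      α * Real.log (Real.log N) ≤ (Real.log N) ^ (1 - α) := by
    have hlo := isLittleO_log_rpow_atTop (show 0 < 1 - α by linarith)
    have hbd := hlo.bound (show 0 < α⁻¹ by positivity)
    have : ∀ᶠ L : ℝ in atTop, α * Real.log L ≤ L ^ (1 - α) := by
      filter_upwards [hbd, eventually_ge_atTop (1:ℝ)] with L hL hL1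
      have hpos : (0:ℝ) ≤ L ^ (1-α) := Real.rpow_nonneg (by linarith) _
      have hlogpos : 0 ≤ Real.log L := Real.log_nonneg hL1
      rw [Real.norm_eq_abs, Real.norm_eq_abs, abs_of_nonneg hlogpos,
        abs_of_nonneg hpos] at hL
      calc α * Real.log L ≤ α * (α⁻¹ * L ^ (1-α)) := by
            apply mul_le_mul_of_nonneg_left hL hα0.le
        _ = L ^ (1-α) := by field_simp
    exact hLtend.eventually this
  obtain ⟨N₁, hev⟩ := Filter.eventually_atTop.mp (ev1.and (ev2.and ev3))
  refine ⟨max N₁ 1, fun N hN => ?_⟩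
  obtain ⟨hN1, hN2, hN3⟩ := hev N (le_trans (le_max_left _ _) hN)
  have hNge1 : 1 ≤ N := le_trans (le_max_right _ _) hN
  set L : ℝ := Real.log N with hL
  have hL1 : 1 < L := hN1
  have hL0 : 0 < L := by linarith
  set δ : ℝ := L ^ (-α) with hδ
  have hδ0 : 0 < δ := Real.rpow_pos_of_pos hL0 _
  have hδ1 : δ < 1 := by
    rw [hδ]
    exact Real.rpow_lt_one_of_one_lt_of_neg hL1 (by linarith)
  have hlogδ : -Real.log δ = α * Real.log L := by
    rw [hδ, Real.log_rpow hL0]; ring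
  have hδL : δ * L = L ^ (1 - α) := by
    rw [hδ]
    nth_rewrite 2 [← Real.rpow_one L]
    rw [← Real.rpow_add hL0]
    ring_nf
  have htail1 : (N:ℝ) ^ (-δ) / δ ≤ 1 := by
    have hN0 : (0:ℝ) < N := by exact_mod_cast hNge1
    have hδinv : δ⁻¹ = Real.exp (α * Real.log L) := by
      rw [hδ, Real.rpow_neg hL0.le, inv_inv, Real.rpow_def_of_pos hL0]
      ring_nf
    rw [div_eq_mul_inv, Real.rpow_def_of_pos hN0, hδinv, ← Real.exp_add]
    apply Real.exp_le_one_iff.mpr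
    have : Real.log N = L := rfl
    rw [this]
    nlinarith [hN3, hδL]
  -- notation
  set Jp : ℕ → ℝ := fun n => if n.Prime ∧ (n : ZMod q) = a then ((n:ℝ) ^ (-(1+δ))) else 0
    with hJp
  have hsumJp : Summable Jp := sumJp q a hδ0
  have hJpn : ∀ n, 0 ≤ Jp n := by
    intro n
    rw [hJp]; dsimp only; split_ifs
    · exact Real.rpow_nonneg (Nat.cast_nonneg n) _
    · exact le_rfl
  have hsplit : (∑ n ∈ Finset.range (N+1), Jp n) + ∑' k : ℕ, Jp (k + (N+1))
      = ∑' n, Jp n := Summable.sum_add_tsum_nat_add (N+1) hsumJp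
  -- tail estimate
  have hsummaj : Summable (fun k : ℕ => ((k + (N + 1) : ℕ) : ℝ) ^ (-(1+δ))) :=
    (summable_nat_add_iff (f := fun n : ℕ => ((n:ℝ) ^ (-(1+δ)))) (N+1)).mpr
      (Real.summable_nat_rpow.mpr (show -(1+δ) < -1 by linarith))
  have htail2 : ∑' k : ℕ, Jp (k + (N+1)) ≤ 1 := by
    calc ∑' k : ℕ, Jp (k + (N+1))
        ≤ ∑' k : ℕ, ((k + (N + 1) : ℕ) : ℝ) ^ (-(1+δ)) := by
          refine Summable.tsum_le_tsum (fun k => ?_) ((summable_nat_add_iff (N+1)).mpr hsumJp) hsummaj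
          rw [hJp]; dsimp only
          split_ifs
          · exact le_rfl
          · exact Real.rpow_nonneg (Nat.cast_nonneg _) _
      _ = ∑' k : ℕ, ((k + N + 1 : ℕ) : ℝ) ^ (-(1+δ)) := by
          refine tsum_congr fun k => ?_
          rw [show k + (N+1) = k + N + 1 from by omega]
      _ ≤ (N:ℝ) ^ (-δ) / δ := aux_tail hNge1 hδ0
      _ ≤ 1 := htail1
  -- head estimate
  set A : Finset ℕ := (Finset.range (N+1)).filter
    (fun n => n.Prime ∧ (n : ZMod q) = a) with hA
  have hhead : ∑ n ∈ Finset.range (N+1), Jp n = ∑ n ∈ A, ((n:ℝ) ^ (-(1+δ))) := by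
    rw [hA, Finset.sum_filter]
  have hone : ∀ n ∈ A, (1:ℝ) ≤ n := by
    intro n hn
    have := (Finset.mem_filter.mp hn).2.1.two_le
    exact_mod_cast le_trans one_le_two (by exact_mod_cast this)
  have hAsplit : (∑ n ∈ A.filter (fun n => n ∉ B), ((n:ℝ) ^ (-(1+δ))))
      + ∑ n ∈ A.filter (fun n => ¬ n ∉ B), ((n:ℝ) ^ (-(1+δ)))
      = ∑ n ∈ A, ((n:ℝ) ^ (-(1+δ))) :=
    Finset.sum_filter_add_sum_filter_not A _ _
  have hBbound : ∑ n ∈ A.filter (fun n => ¬ n ∉ B), ((n:ℝ) ^ (-(1+δ))) ≤ B.card := by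
    calc ∑ n ∈ A.filter (fun n => ¬ n ∉ B), ((n:ℝ) ^ (-(1+δ)))
        ≤ ∑ _n ∈ A.filter (fun n => ¬ n ∉ B), (1:ℝ) := by
          refine Finset.sum_le_sum fun n hn => ?_
          exact Real.rpow_le_one_of_one_le_of_nonpos
            (hone n (Finset.mem_filter.mp hn).1) (by linarith)
      _ = (A.filter (fun n => ¬ n ∉ B)).card := by simp
      _ ≤ B.card := by
          apply Nat.cast_le.mpr
          apply Finset.card_le_card
          intro n hn
          have := (Finset.mem_filter.mp hn).2
          simpa using this
  -- identification of the filtered set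
  have hmod : ∀ n : ℕ, ((n:ℤ) ≡ h [ZMOD (q:ℤ)]) ↔ ((n : ZMod q) = a) := by
    intro n
    rw [← ZMod.intCast_eq_intCast_iff, haa, Int.cast_natCast]
  have hAT : A.filter (fun n => n ∉ B) = (Finset.range (N + 1)).filter
      (fun p : ℕ => p.Prime ∧ (p : ℤ) ≡ h [ZMOD (q : ℤ)] ∧ p ∉ B) := by
    rw [hA, Finset.filter_filter]
    apply Finset.filter_congr
    intro n _
    constructor
    · rintro ⟨⟨h1, h2⟩, h3⟩
      exact ⟨h1, (hmod n).mpr h2, h3⟩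
    · rintro ⟨h1, h2, h3⟩
      exact ⟨⟨h1, (hmod n).mp h2⟩, h3⟩
  have hfinal1 : ∑ n ∈ A.filter (fun n => n ∉ B), ((n:ℝ) ^ (-(1+δ)))
      ≤ ∑ p ∈ (Finset.range (N + 1)).filter
          (fun p : ℕ => p.Prime ∧ (p : ℤ) ≡ h [ZMOD (q : ℤ)] ∧ p ∉ B), (1:ℝ)/p := by
    rw [hAT]
    refine Finset.sum_le_sum fun n hn => ?_
    have hn1 : (1:ℝ) ≤ n := by
      have := (Finset.mem_filter.mp hn).2.1.two_le
      exact_mod_cast le_trans one_le_two (by exact_mod_cast this)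
    rw [one_div, ← Real.rpow_neg_one (n:ℝ)]
    exact Real.rpow_le_rpow_of_exponent_le hn1 (by linarith)
  -- lower bound from key lemma
  have hkey := hC hδ0 hδ1
  rw [hlogδ] at hkey
  -- arithmetic assembly
  have hlogL0 : 0 ≤ Real.log L := Real.log_nonneg hL1.le
  have hstep : (1 / (q.totient : ℝ) - ε) * Real.log L
      ≤ α * (q.totient : ℝ)⁻¹ * Real.log L - (C + 1 + B.card) := by
    have e1 : C + 1 + (B.card:ℝ) ≤ ε/2 * Real.log L := by
      rw [div_le_iff₀ hε] at hN2
      ring_nf at hN2 ⊢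
      linarith
    have e2 : ((q.totient:ℝ)⁻¹ - ε/2) * Real.log L ≤ α * (q.totient:ℝ)⁻¹ * Real.log L := by
      calc ((q.totient:ℝ)⁻¹ - ε/2) * Real.log L
          ≤ (α * (q.totient:ℝ)⁻¹) * Real.log L := mul_le_mul_of_nonneg_right hαb hlogL0
        _ = α * (q.totient:ℝ)⁻¹ * Real.log L := by ring
    rw [one_div]
    ring_nf at e2 ⊢
    linarith
  have hkey' : α * (q.totient:ℝ)⁻¹ * Real.log L - C ≤ ∑' n, Jp n := by
    rw [show α * (q.totient:ℝ)⁻¹ * Real.log L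
      = (q.totient:ℝ)⁻¹ * (α * Real.log L) from by ring]
    exact hkey
  linarith [hfinal1, hAsplit, hBbound, hhead, hsplit, htail2, hkey', hstep]
end
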